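/- arXiv:2604.14400 — 3 statements merged into one kernel-verified Lean document; each statement's English description precedes it below -/
import Mathlib

section
/- If f : ℝ → ℝ is continuous on an interval I₀ and f = g + R on I₀, and g(I) denotes the exact image of I under g, and □R(I) is any interval containing R(I), then the interval g(I) + □R(I) contains f(I), and the Hausdorff distance between f(I) and g(I) + □R(I) is at most the width of □R(I). -/
open Set Pointwise

theorem cornelius_lohner
    (f g R : ℝ → ℝ) (a₀ b₀ a b c d : ℝ)
    (hab : a ≤ b) (hcd : c ≤ d)
    (hI : Icc a b ⊆ Icc a₀ b₀)
    (hf : ContinuousOn f (Icc a₀ b₀))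
    (hsplit : ∀ x ∈ Icc a₀ b₀, f x = g x + R x)
    (hR : R '' Icc a b ⊆ Icc c d) :
    f '' Icc a b ⊆ g '' Icc a b + Icc c d ∧
      max |sInf (f '' Icc a b) - sInf (g '' Icc a b + Icc c d)|
          |sSup (f '' Icc a b) - sSup (g '' Icc a b + Icc c d)| ≤ d - c := by
  have hne : (Icc a b).Nonempty := nonempty_Icc.2 hab
  have hRx : ∀ x ∈ Icc a b, R x ∈ Icc c d := fun x hx => hR ⟨x, hx, rfl⟩
  have hfx : ∀ x ∈ Icc a b, f x = g x + R x := fun x hx => hsplit x (hI hx)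
  -- f '' Icc a b is bounded (compactness)
  have hcomp : IsCompact (f '' Icc a b) :=
    (isCompact_Icc.image_of_continuousOn (hf.mono hI))
  have hfbdda : BddAbove (f '' Icc a b) := hcomp.bddAbove
  have hfbddb : BddBelow (f '' Icc a b) := hcomp.bddBelow
  have hfne : (f '' Icc a b).Nonempty := hne.image f
  have hgne : (g '' Icc a b).Nonempty := hne.image g
  -- bounds for g image
  obtain ⟨A, hA⟩ := id hfbdda
  obtain ⟨B, hB⟩ := id hfbddb
  have hgbdda : BddAbove (g '' Icc a b) := by
    refine ⟨A - c, fun y hy => ?_⟩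
    obtain ⟨x, hx, rfl⟩ := hy
    have h1 : f x ≤ A := hA ⟨x, hx, rfl⟩
    have h2 := (hRx x hx).1
    have := hfx x hx
    linarith
  have hgbddb : BddBelow (g '' Icc a b) := by
    refine ⟨B - d, fun y hy => ?_⟩
    obtain ⟨x, hx, rfl⟩ := hy
    have h1 : B ≤ f x := hB ⟨x, hx, rfl⟩
    have h2 := (hRx x hx).2
    have := hfx x hx
    linarith
  constructor
  · rintro y ⟨x, hx, rfl⟩
    rw [hfx x hx]
    exact add_mem_add ⟨x, hx, rfl⟩ (hRx x hx)
  · have hsum_inf : sInf (g '' Icc a b + Icc c d) = sInf (g '' Icc a b) + c := by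
      rw [csInf_add hgne hgbddb (nonempty_Icc.2 hcd) bddBelow_Icc, csInf_Icc hcd]
    have hsum_sup : sSup (g '' Icc a b + Icc c d) = sSup (g '' Icc a b) + d := by
      rw [csSup_add hgne hgbdda (nonempty_Icc.2 hcd) bddAbove_Icc, csSup_Icc hcd]
    have h1 : sInf (g '' Icc a b) + c ≤ sInf (f '' Icc a b) := by
      refine le_csInf hfne ?_
      rintro y ⟨x, hx, rfl⟩
      have hg : sInf (g '' Icc a b) ≤ g x := csInf_le hgbddb ⟨x, hx, rfl⟩
      have := hfx x hx
      have := (hRx x hx).1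
      linarith
    have h2 : sInf (f '' Icc a b) ≤ sInf (g '' Icc a b) + d := by
      have : sInf (f '' Icc a b) - d ≤ sInf (g '' Icc a b) := by
        refine le_csInf hgne ?_
        rintro y ⟨x, hx, rfl⟩
        have hfle : sInf (f '' Icc a b) ≤ f x := csInf_le hfbddb ⟨x, hx, rfl⟩
        have := hfx x hx
        have := (hRx x hx).2
        linarith
      linarith
    have h3 : sSup (f '' Icc a b) ≤ sSup (g '' Icc a b) + d := by
      refine csSup_le hfne ?_
      rintro y ⟨x, hx, rfl⟩
      have hg : g x ≤ sSup (g '' Icc a b) := le_csSup hgbdda ⟨x, hx, rfl⟩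
      have := hfx x hx
      have := (hRx x hx).2
      linarith
    have h4 : sSup (g '' Icc a b) + c ≤ sSup (f '' Icc a b) := by
      have : sSup (g '' Icc a b) ≤ sSup (f '' Icc a b) - c := by
        refine csSup_le hgne ?_
        rintro y ⟨x, hx, rfl⟩
        have hfle : f x ≤ sSup (f '' Icc a b) := le_csSup hfbdda ⟨x, hx, rfl⟩
        have := hfx x hx
        have := (hRx x hx).1
        linarith
      linarith
    rw [hsum_inf, hsum_sup]
    rw [max_le_iff, abs_le, abs_le]
    constructor <;> constructor <;> linarith
end

section
/- If f : ℝ² → ℝ is continuous on a box B₀ and f = g + R on B₀, and for a box B ⊆ B₀, □g(B) and □R(B) are intervals containing g(B) and R(B) respectively, then □g(B) + □R(B) ⊇ f(B), and the Hausdorff distance between f(B) and □g(B) + □R(B) is at most the Hausdorff distance between g(B) and □g(B) plus the width of □R(B). -/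
open Set

theorem generalized_cornelius_lohner
    (f g R : ℝ × ℝ → ℝ) (p₀ p₁ q₀ q₁ : ℝ × ℝ) (gc gd rc rd : ℝ)
    (hB : Icc q₀ q₁ ⊆ Icc p₀ p₁) (hq : q₀ ≤ q₁)
    (hgcd : gc ≤ gd) (hrcd : rc ≤ rd)
    (hf : ContinuousOn f (Icc p₀ p₁))
    (hsplit : ∀ x ∈ Icc p₀ p₁, f x = g x + R x)
    (hg : g '' Icc q₀ q₁ ⊆ Icc gc gd)
    (hR : R '' Icc q₀ q₁ ⊆ Icc rc rd) :
    f '' Icc q₀ q₁ ⊆ Icc (gc + rc) (gd + rd) ∧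
      max |sInf (f '' Icc q₀ q₁) - (gc + rc)| |sSup (f '' Icc q₀ q₁) - (gd + rd)| ≤
        max |sInf (g '' Icc q₀ q₁) - gc| |sSup (g '' Icc q₀ q₁) - gd| + (rd - rc) := by
  have hS : (Icc q₀ q₁).Nonempty := nonempty_Icc.2 hq
  have hsub : ∀ x ∈ Icc q₀ q₁, f x = g x + R x := fun x hx => hsplit x (hB hx)
  have himg : f '' Icc q₀ q₁ ⊆ Icc (gc + rc) (gd + rd) := by
    rintro y ⟨x, hx, rfl⟩
    have hg' := hg ⟨x, hx, rfl⟩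
    have hR' := hR ⟨x, hx, rfl⟩
    rw [hsub x hx]
    exact ⟨add_le_add hg'.1 hR'.1, add_le_add hg'.2 hR'.2⟩
  refine ⟨himg, ?_⟩
  have hfne : (f '' Icc q₀ q₁).Nonempty := hS.image f
  have hgne : (g '' Icc q₀ q₁).Nonempty := hS.image g
  have hfbddB : BddBelow (f '' Icc q₀ q₁) := ⟨gc + rc, fun y hy => (himg hy).1⟩
  have hfbddA : BddAbove (f '' Icc q₀ q₁) := ⟨gd + rd, fun y hy => (himg hy).2⟩
  have h1 : sInf (f '' Icc q₀ q₁) ≤ sInf (g '' Icc q₀ q₁) + rd := by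
    rw [← sub_le_iff_le_add]
    apply le_csInf hgne
    rintro y ⟨x, hx, rfl⟩
    have hle := csInf_le hfbddB ⟨x, hx, rfl⟩
    have hR' := hR ⟨x, hx, rfl⟩
    rw [hsub x hx] at hle
    linarith [hR'.2]
  have h2 : sSup (g '' Icc q₀ q₁) + rc ≤ sSup (f '' Icc q₀ q₁) := by
    rw [← le_sub_iff_add_le]
    apply csSup_le hgne
    rintro y ⟨x, hx, rfl⟩
    have hle := le_csSup hfbddA ⟨x, hx, rfl⟩
    have hR' := hR ⟨x, hx, rfl⟩
    rw [hsub x hx] at hle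
    linarith [hR'.1]
  have hif : gc + rc ≤ sInf (f '' Icc q₀ q₁) := le_csInf hfne fun y hy => (himg hy).1
  have hsf : sSup (f '' Icc q₀ q₁) ≤ gd + rd := csSup_le hfne fun y hy => (himg hy).2
  have hig : sInf (g '' Icc q₀ q₁) - gc ≤ |sInf (g '' Icc q₀ q₁) - gc| := le_abs_self _
  have hsg : gd - sSup (g '' Icc q₀ q₁) ≤ |sSup (g '' Icc q₀ q₁) - gd| := by
    rw [abs_sub_comm]; exact le_abs_self _
  have hml : |sInf (g '' Icc q₀ q₁) - gc| ≤ max |sInf (g '' Icc q₀ q₁) - gc| |sSup (g '' Icc q₀ q₁) - gd| := le_max_left _ _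
  have hmr : |sSup (g '' Icc q₀ q₁) - gd| ≤ max |sInf (g '' Icc q₀ q₁) - gc| |sSup (g '' Icc q₀ q₁) - gd| := le_max_right _ _
  rw [max_le_iff]
  constructor
  · rw [abs_of_nonneg (by linarith)]
    linarith
  · rw [abs_of_nonpos (by linarith)]
    linarith
end

section
/- Let f : ℝ² → ℝ be n times continuously differentiable on a square box B with midpoint m and radius r, and let 1 ≤ m₀ ≤ n. Define the Taylor form □f(B) = T_{m₀−1}(B) + r^{m₀}·[−S, S] where S = ∑_{k=m₀}^{n} s_k r^{k−m₀}, s_k = (1/k!)∑_{j=0}^{k} C(k,j)|f^{(k−j,j)}(m)| for k < n, and s_n = (1/n!)∑_{j=0}^{n} C(n,j)·M_j with M_j ≥ sup_{x∈B}|f^{(n−j,j)}(x)|. Then f(B) ⊆ □f(B), i.e., the Taylor form is a valid range enclosure. -/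
open Set Pointwise

/-- Partial derivative with respect to the first variable. -/
noncomputable def pdx (f : ℝ × ℝ → ℝ) : ℝ × ℝ → ℝ :=
  fun p => deriv (fun x => f (x, p.2)) p.1

/-- Partial derivative with respect to the second variable. -/
noncomputable def pdy (f : ℝ × ℝ → ℝ) : ℝ × ℝ → ℝ :=
  fun p => deriv (fun y => f (p.1, y)) p.2

/-- The mixed partial derivative `∂^{i+j} f / ∂x^i ∂y^j`. -/
noncomputable def partialDeriv2 (f : ℝ × ℝ → ℝ) (i j : ℕ) : ℝ × ℝ → ℝ :=
  pdx^[i] (pdy^[j] f)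

/-!
Fix `q ∈ B` and put `v = q - m`. Along the segment `t ↦ m + t • v`, which stays in the convex
box `B`, the `k`-th derivative of `f` is `(v ⬝ ∇)^k f = ∑ⱼ C(k,j) v₁^(k-j) v₂^j f^(k-j,j)`: the
mixed partials may be reordered by Schwarz's theorem, and the binomial coefficients come from
Pascal's rule. Taylor's theorem with Lagrange remainder for `t ↦ f (m + t • v)` on `[0, 1]` then
writes `f q - T q` as the terms of orders `m₀ ≤ k < n` at `m` plus the `n`-th term at an
intermediate point, and `|v₁|, |v₂| ≤ r` bounds the `k`-th term by `s k * r ^ k`.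
-/

section PartialDerivatives

variable {g h₁ h₂ : ℝ × ℝ → ℝ} {U : Set (ℝ × ℝ)} {p : ℝ × ℝ}

lemma pdx_eq_fderiv (hg : DifferentiableAt ℝ g p) : pdx g p = fderiv ℝ g p (1, 0) :=
  (hg.hasFDerivAt.comp_hasDerivAt p.1 ((hasDerivAt_id p.1).prodMk (hasDerivAt_const _ _))).deriv

lemma pdy_eq_fderiv (hg : DifferentiableAt ℝ g p) : pdy g p = fderiv ℝ g p (0, 1) :=
  (hg.hasFDerivAt.comp_hasDerivAt p.2 ((hasDerivAt_const _ _).prodMk (hasDerivAt_id p.2))).deriv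

lemma fderiv_apply_eq_pdx_add_pdy (hg : DifferentiableAt ℝ g p) (v : ℝ × ℝ) :
    fderiv ℝ g p v = v.1 * pdx g p + v.2 * pdy g p := by
  have hv : v = v.1 • ((1 : ℝ), (0 : ℝ)) + v.2 • ((0 : ℝ), (1 : ℝ)) := by simp
  rw [hv, map_add, map_smul, map_smul, pdx_eq_fderiv hg, pdy_eq_fderiv hg]
  simp

lemma pdx_congr (hU : IsOpen U) (h : EqOn h₁ h₂ U) : EqOn (pdx h₁) (pdx h₂) U := by
  intro p hp
  have hline : ContinuousAt (fun x : ℝ => (x, p.2)) p.1 := by fun_prop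
  refine Filter.EventuallyEq.deriv_eq ?_
  filter_upwards [hline.preimage_mem_nhds (hU.mem_nhds hp)] with x hx using h hx

lemma contDiffOn_pdx {m : ℕ} (hU : IsOpen U) (hg : ContDiffOn ℝ (m + 1) g U) :
    ContDiffOn ℝ m (pdx g) U :=
  ((hg.fderiv_of_isOpen hU le_rfl).clm_apply contDiffOn_const).congr fun _ hq =>
    pdx_eq_fderiv ((hg.contDiffAt (hU.mem_nhds hq)).differentiableAt (by simp))

lemma contDiffOn_pdy {m : ℕ} (hU : IsOpen U) (hg : ContDiffOn ℝ (m + 1) g U) :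
    ContDiffOn ℝ m (pdy g) U :=
  ((hg.fderiv_of_isOpen hU le_rfl).clm_apply contDiffOn_const).congr fun _ hq =>
    pdy_eq_fderiv ((hg.contDiffAt (hU.mem_nhds hq)).differentiableAt (by simp))

lemma contDiffOn_iterate_pdx {m : ℕ} (hU : IsOpen U) (i : ℕ)
    (hg : ContDiffOn ℝ (m + i) g U) : ContDiffOn ℝ m (pdx^[i] g) U := by
  induction i generalizing g with
  | zero => simpa using hg
  | succ i ih =>
    rw [Function.iterate_succ_apply]
    exact ih (contDiffOn_pdx hU (by simpa [add_assoc] using hg))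

lemma contDiffOn_iterate_pdy {m : ℕ} (hU : IsOpen U) (j : ℕ)
    (hg : ContDiffOn ℝ (m + j) g U) : ContDiffOn ℝ m (pdy^[j] g) U := by
  induction j generalizing g with
  | zero => simpa using hg
  | succ j ih =>
    rw [Function.iterate_succ_apply]
    exact ih (contDiffOn_pdy hU (by simpa [add_assoc] using hg))

lemma pdx_pdy_eq_pdy_pdx (hU : IsOpen U) (hg : ContDiffOn ℝ 2 g U) (hp : p ∈ U) :
    pdx (pdy g) p = pdy (pdx g) p := by
  have hdiff : ∀ q ∈ U, DifferentiableAt ℝ g q := fun q hq =>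
    (hg.contDiffAt (hU.mem_nhds hq)).differentiableAt (by simp)
  have hD2 : DifferentiableAt ℝ (fderiv ℝ g) p :=
    ((hg.fderiv_of_isOpen hU (m := 1) (by norm_num)).contDiffAt (hU.mem_nhds hp)).differentiableAt
      one_ne_zero
  have hfderiv_apply : ∀ w : ℝ × ℝ, ∀ {h : ℝ × ℝ → ℝ}, DifferentiableAt ℝ h p →
      (∀ q ∈ U, h q = fderiv ℝ g q w) → ∀ v, fderiv ℝ h p v = fderiv ℝ (fderiv ℝ g) p v w := by
    intro w h _ hh v
    have hev : h =ᶠ[nhds p] fun q => fderiv ℝ g q w :=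
      Filter.eventually_of_mem (hU.mem_nhds hp) hh
    rw [hev.fderiv_eq, fderiv_clm_apply hD2 (differentiableAt_const _)]
    simp
  have hdy : DifferentiableAt ℝ (pdy g) p :=
    ((contDiffOn_pdy (m := 1) hU hg).contDiffAt (hU.mem_nhds hp)).differentiableAt one_ne_zero
  have hdx : DifferentiableAt ℝ (pdx g) p :=
    ((contDiffOn_pdx (m := 1) hU hg).contDiffAt (hU.mem_nhds hp)).differentiableAt one_ne_zero
  rw [pdx_eq_fderiv hdy, pdy_eq_fderiv hdx,
    hfderiv_apply _ hdy (fun q hq => pdy_eq_fderiv (hdiff q hq)),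
    hfderiv_apply _ hdx (fun q hq => pdx_eq_fderiv (hdiff q hq)),
    (hg.contDiffAt (hU.mem_nhds hp)).isSymmSndFDerivAt (by simp)]

end PartialDerivatives

section MixedPartials

variable {f : ℝ × ℝ → ℝ} {U : Set (ℝ × ℝ)} {n : ℕ}

lemma pdx_partialDeriv2 (f : ℝ × ℝ → ℝ) (i j : ℕ) :
    pdx (partialDeriv2 f i j) = partialDeriv2 f (i + 1) j :=
  (Function.iterate_succ_apply' pdx i _).symm

lemma contDiffOn_partialDeriv2 (hU : IsOpen U) (hf : ContDiffOn ℝ n f U) {m i j : ℕ}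
    (h : m + i + j ≤ n) : ContDiffOn ℝ m (partialDeriv2 f i j) U :=
  contDiffOn_iterate_pdx hU i <| contDiffOn_iterate_pdy hU j <| hf.of_le (by exact_mod_cast h)

lemma pdy_partialDeriv2 (hU : IsOpen U) (hf : ContDiffOn ℝ n f U) {i j : ℕ}
    (h : i + j + 1 ≤ n) : EqOn (pdy (partialDeriv2 f i j)) (partialDeriv2 f i (j + 1)) U := by
  induction i with
  | zero => exact fun _ _ => (congrFun (Function.iterate_succ_apply' pdy j f) _).symm
  | succ i ih =>
    intro q hq
    have hC2 : ContDiffOn ℝ 2 (partialDeriv2 f i j) U :=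
      contDiffOn_partialDeriv2 (m := 2) hU hf (by omega)
    rw [← pdx_partialDeriv2, ← pdx_pdy_eq_pdy_pdx hU hC2 hq, pdx_congr hU (ih (by omega)) hq,
      pdx_partialDeriv2]

end MixedPartials

/-- `(v ⬝ ∇)^k f`, expanded into mixed partials by the binomial formula. -/
noncomputable def iterDirDeriv (f : ℝ × ℝ → ℝ) (v : ℝ × ℝ) (k : ℕ) (x : ℝ × ℝ) : ℝ :=
  ∑ j ∈ Finset.range (k + 1),
    (k.choose j : ℝ) * v.1 ^ (k - j) * v.2 ^ j * partialDeriv2 f (k - j) j x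

section DirectionalDerivatives

open Finset Nat

variable {f : ℝ × ℝ → ℝ} {U : Set (ℝ × ℝ)} {n : ℕ} {p v : ℝ × ℝ}

lemma hasDerivAt_comp_add_smul {h : ℝ × ℝ → ℝ} {t : ℝ}
    (hh : DifferentiableAt ℝ h (p + t • v)) :
    HasDerivAt (fun t => h (p + t • v))
      (v.1 * pdx h (p + t • v) + v.2 * pdy h (p + t • v)) t := by
  have hline : HasDerivAt (fun t : ℝ => p + t • v) v t := by
    simpa using ((hasDerivAt_id t).smul_const v).const_add p
  rw [← fderiv_apply_eq_pdx_add_pdy hh]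
  exact hh.hasFDerivAt.comp_hasDerivAt t hline

lemma hasDerivAt_iterDirDeriv (hU : IsOpen U) (hf : ContDiffOn ℝ n f U) {k : ℕ}
    (hk : k + 1 ≤ n) {t : ℝ} (ht : p + t • v ∈ U) :
    HasDerivAt (fun t => iterDirDeriv f v k (p + t • v))
      (iterDirDeriv f v (k + 1) (p + t • v)) t := by
  set x := p + t • v
  set term : ℕ → ℕ → ℝ := fun i j => v.1 ^ i * v.2 ^ j * partialDeriv2 f i j x
  have hterm : ∀ j ∈ range (k + 1), HasDerivAt
      (fun t => (k.choose j : ℝ) * v.1 ^ (k - j) * v.2 ^ j * partialDeriv2 f (k - j) j (p + t • v))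
      ((k.choose j : ℝ) * term (k + 1 - j) j + (k.choose j : ℝ) * term (k - j) (j + 1)) t := by
    intro j hj
    have hjk : j ≤ k := Nat.lt_succ_iff.mp (mem_range.1 hj)
    have hdiff : DifferentiableAt ℝ (partialDeriv2 f (k - j) j) x :=
      ((contDiffOn_partialDeriv2 (m := 1) hU hf (by omega)).contDiffAt
        (hU.mem_nhds ht)).differentiableAt one_ne_zero
    refine ((hasDerivAt_comp_add_smul hdiff).const_mul _).congr_deriv ?_
    rw [pdx_partialDeriv2, pdy_partialDeriv2 hU hf (by omega) ht, Nat.sub_add_comm hjk]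
    ring
  refine (HasDerivAt.fun_sum hterm).congr_deriv ?_
  rw [sum_add_distrib, ← sum_choose_succ_mul (fun j i => term i j) k]
  simp only [iterDirDeriv, term, mul_assoc]

lemma iteratedDerivWithin_eq_iterDirDeriv (hU : IsOpen U) (hf : ContDiffOn ℝ n f U)
    (hseg : ∀ t ∈ Icc (0 : ℝ) 1, p + t • v ∈ U) (k : ℕ) (hk : k ≤ n) {t : ℝ}
    (ht : t ∈ Icc (0 : ℝ) 1) :
    iteratedDerivWithin k (fun t => f (p + t • v)) (Icc 0 1) t =
      iterDirDeriv f v k (p + t • v) := by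
  induction k generalizing t with
  | zero => simp [iterDirDeriv, partialDeriv2]
  | succ k ih =>
    rw [iteratedDerivWithin_succ,
      derivWithin_congr (fun s hs => ih (by omega) hs) (ih (by omega) ht)]
    exact (hasDerivAt_iterDirDeriv hU hf hk (hseg t ht)).hasDerivWithinAt.derivWithin
      (uniqueDiffOn_Icc zero_lt_one t ht)

lemma taylor_mean_remainder_lagrange_iterDirDeriv (hU : IsOpen U) (hf : ContDiffOn ℝ n f U)
    (hseg : ∀ t ∈ Icc (0 : ℝ) 1, p + t • v ∈ U) :
    ∃ ξ ∈ Icc (0 : ℝ) 1, f (p + v) =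
      ∑ k ∈ range n, iterDirDeriv f v k p / k ! + iterDirDeriv f v n (p + ξ • v) / n ! := by
  obtain _ | N := n
  · exact ⟨1, right_mem_Icc.2 zero_le_one, by simp [iterDirDeriv, partialDeriv2]⟩
  set g : ℝ → ℝ := fun t => f (p + t • v)
  have hD := iteratedDerivWithin_eq_iterDirDeriv hU hf hseg
  have hg : ContDiffOn ℝ N g (Icc 0 1) :=
    (hf.comp (by fun_prop : ContDiff ℝ (N + 1) fun t : ℝ => p + t • v).contDiffOn hseg).of_le
      (by exact_mod_cast N.le_succ)
  have hg' : DifferentiableOn ℝ (iteratedDerivWithin N g (Icc 0 1)) (Ioo 0 1) := fun t ht =>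
    (hasDerivAt_iterDirDeriv hU hf le_rfl (hseg t (Ioo_subset_Icc_self ht))).differentiableAt
      |>.differentiableWithinAt.congr (fun s hs => hD N N.le_succ (Ioo_subset_Icc_self hs))
        (hD N N.le_succ (Ioo_subset_Icc_self ht))
  rw [← Set.uIcc_of_le zero_le_one] at hg hg'
  rw [← Set.uIoo_of_le zero_le_one] at hg'
  obtain ⟨ξ, hξ, hR⟩ := taylor_mean_remainder_lagrange zero_ne_one hg hg'
  have hξ' : ξ ∈ Icc (0 : ℝ) 1 := Ioo_subset_Icc_self (by rwa [Set.uIoo_of_le zero_le_one] at hξ)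
  refine ⟨ξ, hξ', ?_⟩
  rw [Set.uIcc_of_le zero_le_one, taylor_within_apply, hD _ le_rfl hξ'] at hR
  have hcoeff : ∀ k ∈ range (N + 1), ((k ! : ℝ)⁻¹ * (1 - 0) ^ k) •
      iteratedDerivWithin k g (Icc 0 1) 0 = iterDirDeriv f v k p / k ! := fun k hk => by
    rw [hD k (mem_range.1 hk).le (left_mem_Icc.2 zero_le_one)]
    simp [div_eq_inv_mul]
  rw [sum_congr rfl hcoeff] at hR
  simpa [g, sub_eq_iff_eq_add'] using hR

lemma abs_iterDirDeriv_div_factorial_le {x : ℝ × ℝ} {r : ℝ} {C : ℕ → ℝ} {k : ℕ}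
    (hv₁ : |v.1| ≤ r) (hv₂ : |v.2| ≤ r) (hC : ∀ j ≤ k, |partialDeriv2 f (k - j) j x| ≤ C j) :
    |iterDirDeriv f v k x / k !| ≤
      1 / (k ! : ℝ) * (∑ j ∈ range (k + 1), (k.choose j : ℝ) * C j) * r ^ k := by
  have hr : 0 ≤ r := (abs_nonneg _).trans hv₁
  have hD : |iterDirDeriv f v k x| ≤ r ^ k * ∑ j ∈ range (k + 1), (k.choose j : ℝ) * C j := by
    rw [iterDirDeriv, mul_sum]
    refine (abs_sum_le_sum_abs _ _).trans (sum_le_sum fun j hj => ?_)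
    have hjk : j ≤ k := Nat.lt_succ_iff.mp (mem_range.1 hj)
    rw [abs_mul, abs_mul, abs_mul, Nat.abs_cast, abs_pow, abs_pow]
    calc (k.choose j : ℝ) * |v.1| ^ (k - j) * |v.2| ^ j * |partialDeriv2 f (k - j) j x|
        ≤ (k.choose j : ℝ) * r ^ (k - j) * r ^ j * C j := by gcongr; exact hC j hjk
      _ = r ^ k * ((k.choose j : ℝ) * C j) := by rw [← pow_sub_mul_pow r hjk]; ring
  rw [abs_div, Nat.abs_cast, div_le_iff₀ (by positivity)]
  calc _ ≤ _ := hD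
    _ = _ := by field_simp

end DirectionalDerivatives

lemma mem_Icc_prod_iff_abs_sub_le {a b r : ℝ} {q : ℝ × ℝ} :
    q ∈ Icc (a - r, b - r) (a + r, b + r) ↔ |q.1 - a| ≤ r ∧ |q.2 - b| ≤ r := by
  simp only [mem_Icc, Prod.le_def, abs_sub_le_iff]
  constructor <;> rintro ⟨⟨h₁, h₂⟩, h₃, h₄⟩ <;> refine ⟨⟨?_, ?_⟩, ?_, ?_⟩ <;> linarith

theorem taylor_form_is_enclosure_general
    (f : ℝ × ℝ → ℝ) (n m₀ : ℕ) (hm₀n : m₀ ≤ n)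
    (mx my r : ℝ)
    (U : Set (ℝ × ℝ)) (hU : IsOpen U)
    (hBU : Icc (mx - r, my - r) (mx + r, my + r) ⊆ U)
    (hf : ContDiffOn ℝ n f U)
    (T : ℝ × ℝ → ℝ)
    (hT : ∀ q : ℝ × ℝ, T q =
      ∑ k ∈ Finset.range m₀, (1 / (k.factorial : ℝ)) *
        ∑ j ∈ Finset.range (k + 1), (k.choose j : ℝ) *
          (q.1 - mx) ^ (k - j) * (q.2 - my) ^ j * partialDeriv2 f (k - j) j (mx, my))
    (M : ℕ → ℝ)
    (hM : ∀ j ≤ n, ∀ q ∈ Icc (mx - r, my - r) (mx + r, my + r),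
      |partialDeriv2 f (n - j) j q| ≤ M j)
    (s : ℕ → ℝ)
    (hs : ∀ k < n, s k = (1 / (k.factorial : ℝ)) *
      ∑ j ∈ Finset.range (k + 1), (k.choose j : ℝ) *
        |partialDeriv2 f (k - j) j (mx, my)|)
    (hsn : s n = (1 / (n.factorial : ℝ)) *
      ∑ j ∈ Finset.range (n + 1), (n.choose j : ℝ) * M j)
    (S : ℝ) (hS : S = ∑ k ∈ Finset.Icc m₀ n, s k * r ^ (k - m₀)) :
    f '' Icc (mx - r, my - r) (mx + r, my + r) ⊆
      T '' Icc (mx - r, my - r) (mx + r, my + r) +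
        Icc (-(r ^ m₀ * S)) (r ^ m₀ * S) := by
  rintro _ ⟨q, hq, rfl⟩
  set B := Icc (mx - r, my - r) (mx + r, my + r)
  set p : ℝ × ℝ := (mx, my)
  obtain ⟨hv₁, hv₂⟩ : |(q - p).1| ≤ r ∧ |(q - p).2| ≤ r := mem_Icc_prod_iff_abs_sub_le.1 hq
  have hp : p ∈ B := mem_Icc_prod_iff_abs_sub_le.2 (by simpa [p] using (abs_nonneg _).trans hv₁)
  have hseg : ∀ t ∈ Icc (0 : ℝ) 1, p + t • (q - p) ∈ B := fun t ht =>
    (convex_Icc _ _).add_smul_sub_mem hp hq ht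
  obtain ⟨ξ, hξ, hfq⟩ :=
    taylor_mean_remainder_lagrange_iterDirDeriv hU hf fun t ht => hBU (hseg t ht)
  rw [add_sub_cancel] at hfq
  have hTq : T q = ∑ k ∈ Finset.range m₀, iterDirDeriv f (q - p) k p / k.factorial := by
    simp only [hT, iterDirDeriv, div_eq_inv_mul, mul_one]; rfl
  have hcoeff : ∀ k ∈ Finset.Ico m₀ n,
      |iterDirDeriv f (q - p) k p / k.factorial| ≤ s k * r ^ k := fun k hk =>
    hs k (Finset.mem_Ico.1 hk).2 ▸ abs_iterDirDeriv_div_factorial_le hv₁ hv₂ fun _ _ => le_rfl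
  have hrem : |iterDirDeriv f (q - p) n (p + ξ • (q - p)) / n.factorial| ≤ s n * r ^ n :=
    hsn ▸ abs_iterDirDeriv_div_factorial_le hv₁ hv₂ fun j hj => hM j hj _ (hseg ξ hξ)
  refine ⟨T q, mem_image_of_mem T hq, f q - T q, abs_le.1 ?_, add_sub_cancel _ _⟩
  calc |f q - T q|
      = |∑ k ∈ Finset.Ico m₀ n, iterDirDeriv f (q - p) k p / k.factorial +
          iterDirDeriv f (q - p) n (p + ξ • (q - p)) / n.factorial| := by
        rw [hfq, hTq, ← Finset.sum_range_add_sum_Ico _ hm₀n, add_assoc, add_sub_cancel_left]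
    _ ≤ ∑ k ∈ Finset.Ico m₀ n, s k * r ^ k + s n * r ^ n :=
        (abs_add_le _ _).trans
          (add_le_add ((Finset.abs_sum_le_sum_abs _ _).trans (Finset.sum_le_sum hcoeff)) hrem)
    _ = r ^ m₀ * S := by
        rw [← Finset.sum_Ico_succ_top hm₀n, Finset.Ico_add_one_right_eq_Icc, hS, Finset.mul_sum]
        exact Finset.sum_congr rfl fun k hk => by
          rw [← pow_sub_mul_pow r (Finset.mem_Icc.1 hk).1]; ring

theorem taylor_form_is_enclosure
    (f : ℝ × ℝ → ℝ) (n m₀ : ℕ) (hm₀ : 1 ≤ m₀) (hm₀n : m₀ ≤ n)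
    (mx my r : ℝ) (hr : 0 ≤ r)
    (U : Set (ℝ × ℝ)) (hU : IsOpen U)
    (hBU : Icc (mx - r, my - r) (mx + r, my + r) ⊆ U)
    (hf : ContDiffOn ℝ n f U)
    (T : ℝ × ℝ → ℝ)
    (hT : ∀ q : ℝ × ℝ, T q =
      ∑ k ∈ Finset.range m₀, (1 / (k.factorial : ℝ)) *
        ∑ j ∈ Finset.range (k + 1), (k.choose j : ℝ) *
          (q.1 - mx) ^ (k - j) * (q.2 - my) ^ j * partialDeriv2 f (k - j) j (mx, my))
    (M : ℕ → ℝ)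
    (hM : ∀ j ≤ n, ∀ q ∈ Icc (mx - r, my - r) (mx + r, my + r),
      |partialDeriv2 f (n - j) j q| ≤ M j)
    (s : ℕ → ℝ)
    (hs : ∀ k < n, s k = (1 / (k.factorial : ℝ)) *
      ∑ j ∈ Finset.range (k + 1), (k.choose j : ℝ) *
        |partialDeriv2 f (k - j) j (mx, my)|)
    (hsn : s n = (1 / (n.factorial : ℝ)) *
      ∑ j ∈ Finset.range (n + 1), (n.choose j : ℝ) * M j)
    (S : ℝ) (hS : S = ∑ k ∈ Finset.Icc m₀ n, s k * r ^ (k - m₀)) :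
    f '' Icc (mx - r, my - r) (mx + r, my + r) ⊆
      T '' Icc (mx - r, my - r) (mx + r, my + r) +
        Icc (-(r ^ m₀ * S)) (r ^ m₀ * S) :=
  taylor_form_is_enclosure_general f n m₀ hm₀n mx my r U hU hBU hf T hT M hM s hs hsn S hS
end
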